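/- Let c : ℕ → ℕ be computable with unbounded range. Then for every k : ℕ the set { y : ℕ | C(y) + k ≤ c(y) } is infinite; that is, there are infinitely many objects whose Kolmogorov complexity lies at least k below their assembly index. (This is the strengthening, implicit in the paper's enumeration arguments, that the deceiving objects of Lemma 2.1 occur infinitely often.) -/

import Mathlib

/-- The length of a program (code): number of binary digits of its encoding. -/
def codeLen (e : Nat.Partrec.Code) : ℕ := Nat.size (Encodable.encode e)

/-- A code `e` outputs `y` if evaluating it on input `0` yields `y`. -/
def Outputs (e : Nat.Partrec.Code) (y : ℕ) : Prop := e.eval 0 = Part.some y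

/-- Kolmogorov complexity of `y`: the least length of a code outputting `y`. -/
noncomputable def C (y : ℕ) : ℕ := sInf { n | ∃ e : Nat.Partrec.Code, Outputs e y ∧ codeLen e = n }

/-!
A Berry-paradox argument via Kleene's recursion theorem: given `m`, there is a program `e` that
searches for the first `y` with `c y ≥ encode e + m` and outputs it. This `y` exists because `c`
is unbounded, and the search is computable because `c` is. Since `e` outputs `y`,
`C y + m ≤ codeLen e + m ≤ encode e + m ≤ c y`. The objects so obtained have unbounded
assembly index, so there are infinitely many of them.
-/

open Nat.Partrec (Code)

theorem Computable₂.nat_find {α : Type*} [Primcodable α] {p : α → ℕ → Bool}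
    (hp : Computable₂ p) (h : ∀ a, ∃ n, p a n = true) :
    Computable fun a => Nat.find (h a) :=
  (Partrec.rfind hp.partrec₂).of_eq_tot fun a =>
    Nat.mem_rfind.2
      ⟨by simpa using Nat.find_spec (h a), fun hm => by simpa using Nat.find_min (h a) hm⟩

theorem codeLen_le_encode (e : Code) : codeLen e ≤ Encodable.encode e :=
  Nat.size_le.2 Nat.lt_two_pow_self

theorem C_le_codeLen {e : Code} {y : ℕ} (h : Outputs e y) : C y ≤ codeLen e :=
  Nat.sInf_le ⟨e, h, rfl⟩

theorem exists_outputs_self {g : Code → ℕ} (hg : Computable g) : ∃ e, Outputs e (g e) :=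
  (Code.fixed_point₂ (f := fun e (_ : ℕ) => Part.some (g e))
    (hg.comp Computable.fst).partrec).imp fun _ he => by rw [Outputs, he]

theorem exists_C_add_le_of_computable {c : ℕ → ℕ} (hc : Computable c)
    (hub : ∀ N, ∃ x, N ≤ c x) (m : ℕ) : ∃ y, C y + m ≤ c y := by
  have hfind : Computable fun N => Nat.find (hub N) := by
    have hle : Computable₂ fun N x => decide (N ≤ c x) :=
      Primrec.nat_le.decide.to_comp.comp Computable.fst (hc.comp Computable.snd)
    simpa using hle.nat_find (fun N => by simpa using hub N)
  have hg : Computable fun e : Code => Nat.find (hub (Encodable.encode e + m)) :=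
    hfind.comp ((Primrec.nat_add.comp Primrec.encode (Primrec.const m)).to_comp)
  obtain ⟨e, he⟩ := exists_outputs_self hg
  refine ⟨Nat.find (hub (Encodable.encode e + m)), ?_⟩
  calc C _ + m ≤ Encodable.encode e + m :=
        Nat.add_le_add_right ((C_le_codeLen he).trans (codeLen_le_encode e)) m
    _ ≤ c _ := Nat.find_spec (hub _)

/-- For a computable assembly index `c` with unbounded range, for every `k` the set of
objects whose Kolmogorov complexity lies at least `k` below their assembly index
is infinite. -/
theorem deceiving_objects_infinite
    (c : ℕ → ℕ) (hc : Computable c) (hub : ∀ N : ℕ, ∃ x : ℕ, N ≤ c x) (k : ℕ) :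
    { y : ℕ | C y + k ≤ c y }.Infinite := by
  refine Set.Infinite.of_image c (Set.infinite_of_not_bddAbove (not_bddAbove_iff.2 fun n => ?_))
  obtain ⟨y, hy⟩ := exists_C_add_le_of_computable hc hub (k + n + 1)
  exact ⟨c y, ⟨y, show C y + k ≤ c y by omega, rfl⟩, by omega⟩
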